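/- Let p be a strictly positive probability distribution over discrete variables partitioned into blocks C_1, …, C_m with a 'parent' assignment Pa(C_i) ⊆ C_1 ∪ … ∪ C_{i−1}. If p(V) = Π_i p(C_i | Pa(C_i)) and additionally p(D | Pa(C_i)) = p(D | Pa(D)) for every D ⊆ C_i (where Pa(D) ⊆ Pa(C_i)), then for every D ⊆ C_i: D ⊥_p (C_1 ∪ … ∪ C_{i−1}) \ Pa(D) | Pa(D). -/

import Mathlib

/-!
Summing a marginal `p(A)` over the coordinates of `C ⊆ A` gives `p(A \ C)`, and factors that do
not depend on `C` pass through the sum. Summing the factorization over the last block, then the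
one before it, and so on, shows that it holds for every initial segment of blocks; comparing the
segments before and after `C_i` gives `C_i ⊥ (C_1 ∪ … ∪ C_{i-1}) | Pa(C_i)`. Summing out
`C_i \ D` gives `D ⊥ (C_1 ∪ … ∪ C_{i-1}) | Pa(C_i)`, and contracting with the hypothesis
`D ⊥ Pa(C_i) | Pa(D)` gives the claim.
-/

open scoped Classical

/-- The marginal of a distribution `p` on the coordinates in `S`, evaluated at the
configuration `x` (i.e. the probability that the coordinates in `S` take the values
they take in `x`). -/
noncomputable def marginal {V : Type*} [Fintype V] {X : V → Type*} [∀ v, Fintype (X v)]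
    (p : (∀ v, X v) → ℝ) (S : Finset V) (x : ∀ v, X v) : ℝ :=
  ∑ y : ∀ v, X v, if ∀ v ∈ S, y v = x v then p y else 0

/-- Conditional independence `A ⊥_p B | S` of the sets of coordinates `A` and `B`
given `S`, expressed multiplicatively via marginals:
`p(a,b,s)·p(s) = p(a,s)·p(b,s)`. -/
def CondIndep {V : Type*} [Fintype V] {X : V → Type*} [∀ v, Fintype (X v)]
    (p : (∀ v, X v) → ℝ) (A B S : Finset V) : Prop :=
  ∀ x : ∀ v, X v,
    marginal p (A ∪ B ∪ S) x * marginal p S x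
      = marginal p (A ∪ S) x * marginal p (B ∪ S) x

open Finset

section Marginal

variable {V : Type*} [Fintype V] {X : V → Type*} [∀ v, Fintype (X v)]
  (p : (∀ v, X v) → ℝ)

lemma marginal_congr {S : Finset V} {x y : ∀ v, X v} (h : ∀ v ∈ S, x v = y v) :
    marginal p S x = marginal p S y :=
  sum_congr rfl fun z _ => if_congr (forall₂_congr fun v hv => by rw [h v hv]) rfl rfl

lemma marginal_eq_of_disjoint {S C : Finset V} (hSC : Disjoint S C) {x y : ∀ v, X v}
    (hyx : ∀ v ∉ C, y v = x v) : marginal p S y = marginal p S x :=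
  marginal_congr p fun v hv => hyx v (disjoint_left.1 hSC hv)

lemma marginal_pos (hpos : ∀ x, 0 < p x) (S : Finset V) (x : ∀ v, X v) :
    0 < marginal p S x := by
  unfold marginal
  calc 0 < p x := hpos x
    _ = if ∀ v ∈ S, x v = x v then p x else 0 := (if_pos fun _ _ => rfl).symm
    _ ≤ _ := single_le_sum (f := fun y => if ∀ v ∈ S, y v = x v then p y else 0)
      (fun y _ => by split_ifs <;> simp [(hpos y).le]) (mem_univ x)

lemma marginal_univ (x : ∀ v, X v) : marginal p univ x = p x := by
  simp [marginal, ← funext_iff]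

variable [DecidableEq V]

lemma sum_marginal_eq_marginal_sdiff {A C : Finset V} (hCA : C ⊆ A) (x : ∀ v, X v) :
    ∑ y with ∀ v ∉ C, y v = x v, marginal p A y = marginal p (A \ C) x := by
  unfold marginal
  rw [sum_comm]
  refine sum_congr rfl fun z _ => ?_
  have h_unique : ∀ y : ∀ v, X v, (∀ v ∉ C, y v = x v) → (∀ v ∈ A, z v = y v) →
      y = C.piecewise z x := by
    intro y hyx hzy
    funext v
    by_cases hv : v ∈ C
    · rw [piecewise_eq_of_mem _ _ _ hv, hzy v (hCA hv)]
    · rw [piecewise_eq_of_notMem _ _ _ hv, hyx v hv]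
  by_cases hR : ∀ v ∈ A \ C, z v = x v
  · rw [if_pos hR, sum_eq_single_of_mem (C.piecewise z x) ?_ ?_, if_pos]
    · intro v hv
      by_cases hvC : v ∈ C
      · rw [piecewise_eq_of_mem _ _ _ hvC]
      · rw [piecewise_eq_of_notMem _ _ _ hvC, hR v (mem_sdiff.2 ⟨hv, hvC⟩)]
    · exact mem_filter.2 ⟨mem_univ _, fun v hv => piecewise_eq_of_notMem _ _ _ hv⟩
    · exact fun y hy hne => if_neg fun hzy => hne (h_unique y (mem_filter.1 hy).2 hzy)
  · rw [if_neg hR]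
    refine sum_eq_zero fun y hy => if_neg fun hzy => hR fun v hv => ?_
    rw [mem_sdiff] at hv
    rw [hzy v hv.1, (mem_filter.1 hy).2 v hv.2]

lemma marginal_sdiff_mul_eq {A A' C : Finset V} {g g' : (∀ v, X v) → ℝ}
    (hCA : C ⊆ A) (hCA' : C ⊆ A') (h : ∀ y, marginal p A y * g y = marginal p A' y * g' y)
    (x : ∀ v, X v) (hg : ∀ y, (∀ v ∉ C, y v = x v) → g y = g x)
    (hg' : ∀ y, (∀ v ∉ C, y v = x v) → g' y = g' x) :
    marginal p (A \ C) x * g x = marginal p (A' \ C) x * g' x := by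
  rw [← sum_marginal_eq_marginal_sdiff p hCA, ← sum_marginal_eq_marginal_sdiff p hCA', sum_mul,
    sum_mul]
  refine sum_congr rfl fun y hy => ?_
  rw [← hg y (mem_filter.1 hy).2, ← hg' y (mem_filter.1 hy).2, h]

lemma marginal_union_mul_eq_of_subset {A B D S : Finset V} (hDA : D ⊆ A) (hAB : Disjoint A B)
    (hSB : S ⊆ B)
    (h : ∀ x, marginal p (A ∪ B) x * marginal p S x = marginal p (A ∪ S) x * marginal p B x)
    (x : ∀ v, X v) :
    marginal p (D ∪ B) x * marginal p S x = marginal p (D ∪ S) x * marginal p B x := by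
  have hsdiff : ∀ T, Disjoint A T → (A ∪ T) \ (A \ D) = D ∪ T := by
    intro T hAT
    ext v
    have : v ∈ D → v ∈ A := fun hv => hDA hv
    have : v ∈ A → v ∉ T := fun hv => disjoint_left.1 hAT hv
    simp only [mem_union, mem_sdiff]
    tauto
  have hC : A \ D ⊆ A := sdiff_subset
  have key := marginal_sdiff_mul_eq p (hC.trans subset_union_left) (hC.trans subset_union_left)
    h x (fun y hy => marginal_eq_of_disjoint p ((hAB.mono_right hSB).symm.mono_right hC) hy)
    (fun y hy => marginal_eq_of_disjoint p (hAB.symm.mono_right hC) hy)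
  rwa [hsdiff B hAB, hsdiff S (hAB.mono_right hSB)] at key

lemma condIndep_sdiff_of_subset {A B S : Finset V} (hSB : S ⊆ B)
    (h : ∀ x, marginal p (A ∪ B) x * marginal p S x = marginal p (A ∪ S) x * marginal p B x) :
    CondIndep p A (B \ S) S := by
  intro x
  convert h x using 3 <;> ext v <;> have : v ∈ S → v ∈ B := fun hv => hSB hv <;>
    simp only [mem_union, mem_sdiff] <;> tauto

end Marginal

section Blocks

variable {V : Type*} [DecidableEq V] {m : ℕ}

def indicesBelow (m k : ℕ) : Finset (Fin m) := {j | (j : ℕ) < k}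

def blocksBelow (Cb : Fin m → Finset V) (k : ℕ) : Finset V := (indicesBelow m k).biUnion Cb

@[simp]
lemma mem_indicesBelow {j : Fin m} {k : ℕ} : j ∈ indicesBelow m k ↔ (j : ℕ) < k := by
  simp [indicesBelow]

lemma indicesBelow_succ (i : Fin m) : indicesBelow m (i + 1) = insert i (indicesBelow m i) := by
  ext j
  simp only [mem_insert, mem_indicesBelow, Nat.lt_succ_iff_lt_or_eq, Fin.ext_iff]
  tauto

lemma indicesBelow_self (m : ℕ) : indicesBelow m m = univ :=
  filter_true_of_mem fun j _ => j.2

lemma notMem_indicesBelow_self (i : Fin m) : i ∉ indicesBelow m i := by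
  simp

lemma blocksBelow_succ (Cb : Fin m → Finset V) (i : Fin m) :
    blocksBelow Cb (i + 1) = Cb i ∪ blocksBelow Cb i := by
  rw [blocksBelow, indicesBelow_succ, biUnion_insert, blocksBelow]

lemma blocksBelow_mono (Cb : Fin m → Finset V) : Monotone (blocksBelow Cb) :=
  fun _ _ hkl => biUnion_subset_biUnion_of_subset_left _
    (monotone_filter_right _ fun _ _ hj => hj.trans_le hkl)

lemma subset_blocksBelow (Cb : Fin m → Finset V) {j : Fin m} {k : ℕ} (hjk : (j : ℕ) < k) :
    Cb j ⊆ blocksBelow Cb k :=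
  subset_biUnion_of_mem Cb (mem_indicesBelow.2 hjk)

lemma disjoint_blocksBelow {Cb : Fin m → Finset V}
    (hdisj : ∀ i j : Fin m, i ≠ j → Disjoint (Cb i) (Cb j)) {i : Fin m} {k : ℕ}
    (hki : k ≤ i) :
    Disjoint (Cb i) (blocksBelow Cb k) := by
  refine (disjoint_biUnion_right _ _ _).2 fun j hj => hdisj i j ?_
  rintro rfl
  exact absurd (mem_indicesBelow.1 hj) (not_lt.2 hki)

lemma blocksBelow_eq_univ [Fintype V] {Cb : Fin m → Finset V}
    (hcover : (univ : Finset (Fin m)).biUnion Cb = univ) : blocksBelow Cb m = univ := by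
  rw [← hcover, blocksBelow, indicesBelow_self]

variable [Fintype V] {X : V → Type*} [∀ v, Fintype (X v)] {p : (∀ v, X v) → ℝ}
  {Cb : Fin m → Finset V} {Pa : Finset V → Finset V}

lemma marginal_blocksBelow_mul_prod (hpos : ∀ x, 0 < p x)
    (hcover : (univ : Finset (Fin m)).biUnion Cb = univ)
    (hdisj : ∀ i j : Fin m, i ≠ j → Disjoint (Cb i) (Cb j))
    (hPaC : ∀ i : Fin m, Pa (Cb i) ⊆ blocksBelow Cb i)
    (hfac : ∀ x, p x * ∏ i : Fin m, marginal p (Pa (Cb i)) x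
        = ∏ i : Fin m, marginal p (Cb i ∪ Pa (Cb i)) x)
    {k : ℕ} (hk : k ≤ m) (x : ∀ v, X v) :
    marginal p (blocksBelow Cb k) x * ∏ j ∈ indicesBelow m k, marginal p (Pa (Cb j)) x
      = ∏ j ∈ indicesBelow m k, marginal p (Cb j ∪ Pa (Cb j)) x := by
  induction hk using Nat.decreasingInduction generalizing x with
  | self =>
    rw [blocksBelow_eq_univ hcover, marginal_univ, indicesBelow_self]
    exact hfac x
  | of_succ k hk ih =>
    obtain ⟨i, rfl⟩ : ∃ i : Fin m, (i : ℕ) = k := ⟨⟨k, hk⟩, rfl⟩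
    have hdisj_i : Disjoint (blocksBelow Cb i) (Cb i) :=
      (disjoint_blocksBelow hdisj le_rfl).symm
    have hinv : ∀ S ⊆ blocksBelow Cb i, ∀ y, (∀ v ∉ Cb i, y v = x v) →
        marginal p S y = marginal p S x :=
      fun S hS y hy => marginal_eq_of_disjoint p (hdisj_i.mono_left hS) hy
    have hPa_below : ∀ j ∈ indicesBelow m i, Pa (Cb j) ⊆ blocksBelow Cb i := fun j hj =>
      (hPaC j).trans (blocksBelow_mono Cb (mem_indicesBelow.1 hj).le)
    have key := marginal_sdiff_mul_eq p (A := Cb i ∪ blocksBelow Cb i) (A' := Cb i ∪ Pa (Cb i))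
      (g := fun y => marginal p (Pa (Cb i)) y *
        ∏ j ∈ indicesBelow m i, marginal p (Pa (Cb j)) y)
      (g' := fun y => ∏ j ∈ indicesBelow m i, marginal p (Cb j ∪ Pa (Cb j)) y)
      subset_union_left subset_union_left
      (fun y => by
        simpa only [blocksBelow_succ, indicesBelow_succ,
          prod_insert (notMem_indicesBelow_self i), mul_assoc]
          using ih y) x
      (fun y hy => by
        rw [hinv _ (hPaC i) y hy, prod_congr rfl fun j hj => hinv _ (hPa_below j hj) y hy])
      (fun y hy => prod_congr rfl fun j hj => hinv _ (union_subset
        (subset_blocksBelow Cb (mem_indicesBelow.1 hj)) (hPa_below j hj)) y hy)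
    rw [union_sdiff_cancel_left hdisj_i.symm,
      union_sdiff_cancel_left (hdisj_i.mono_left (hPaC i)).symm] at key
    refine mul_left_cancel₀ (marginal_pos p hpos (Pa (Cb i)) x).ne' ?_
    linear_combination key

lemma marginal_block_union_blocksBelow (hpos : ∀ x, 0 < p x)
    (hcover : (univ : Finset (Fin m)).biUnion Cb = univ)
    (hdisj : ∀ i j : Fin m, i ≠ j → Disjoint (Cb i) (Cb j))
    (hPaC : ∀ i : Fin m, Pa (Cb i) ⊆ blocksBelow Cb i)
    (hfac : ∀ x, p x * ∏ i : Fin m, marginal p (Pa (Cb i)) x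
        = ∏ i : Fin m, marginal p (Cb i ∪ Pa (Cb i)) x)
    (i : Fin m) (x : ∀ v, X v) :
    marginal p (Cb i ∪ blocksBelow Cb i) x * marginal p (Pa (Cb i)) x
      = marginal p (Cb i ∪ Pa (Cb i)) x * marginal p (blocksBelow Cb i) x := by
  have h_succ := marginal_blocksBelow_mul_prod hpos hcover hdisj hPaC hfac i.2 x
  have h_self := marginal_blocksBelow_mul_prod hpos hcover hdisj hPaC hfac i.2.le x
  rw [blocksBelow_succ, indicesBelow_succ, prod_insert (notMem_indicesBelow_self i),
    prod_insert (notMem_indicesBelow_self i)] at h_succ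
  have h_pos : 0 < ∏ j ∈ indicesBelow m i, marginal p (Pa (Cb j)) x :=
    prod_pos fun j _ => marginal_pos p hpos (Pa (Cb j)) x
  refine mul_right_cancel₀ h_pos.ne' ?_
  linear_combination h_succ - marginal p (Cb i ∪ Pa (Cb i)) x * h_self

end Blocks

theorem stmt8_general {V : Type*} [Fintype V] [DecidableEq V] {X : V → Type*}
    [∀ v, Fintype (X v)] {m : ℕ}
    (p : (∀ v, X v) → ℝ) (hpos : ∀ x, 0 < p x)
    (Cb : Fin m → Finset V)
    (hcover : (Finset.univ : Finset (Fin m)).biUnion Cb = Finset.univ)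
    (hdisj : ∀ i j : Fin m, i ≠ j → Disjoint (Cb i) (Cb j))
    (Pa : Finset V → Finset V)
    (hPaC : ∀ i : Fin m,
      Pa (Cb i) ⊆ (Finset.univ.filter (fun j => j < i)).biUnion Cb)
    (hPaD : ∀ i : Fin m, ∀ D ⊆ Cb i, Pa D ⊆ Pa (Cb i))
    -- (i)  p(V) = Π_i p(C_i | Pa(C_i))
    (hfac : ∀ x, p x * ∏ i : Fin m, marginal p (Pa (Cb i)) x
        = ∏ i : Fin m, marginal p (Cb i ∪ Pa (Cb i)) x)
    -- (ii)  p(D | Pa(C_i)) = p(D | Pa(D)) for every D ⊆ C_i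
    (hcond : ∀ i : Fin m, ∀ D ⊆ Cb i, ∀ x,
      marginal p (D ∪ Pa (Cb i)) x * marginal p (Pa D) x
        = marginal p (D ∪ Pa D) x * marginal p (Pa (Cb i)) x) :
    ∀ i : Fin m, ∀ D ⊆ Cb i,
      CondIndep p D
        (((Finset.univ.filter (fun j => j < i)).biUnion Cb) \ Pa D) (Pa D) := by
  intro i D hD
  have hPa_below : ∀ j : Fin m, Pa (Cb j) ⊆ blocksBelow Cb j := hPaC
  have hPaD_below : Pa D ⊆ blocksBelow Cb i := (hPaD i D hD).trans (hPaC i)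
  refine condIndep_sdiff_of_subset (B := blocksBelow Cb i) p hPaD_below fun x => ?_
  have hD_indep := marginal_union_mul_eq_of_subset p hD (disjoint_blocksBelow hdisj le_rfl)
    (hPaC i) (marginal_block_union_blocksBelow hpos hcover hdisj hPa_below hfac i) x
  refine mul_right_cancel₀ (marginal_pos p hpos (Pa (Cb i)) x).ne' ?_
  linear_combination marginal p (Pa D) x * hD_indep
    + marginal p (blocksBelow Cb i) x * hcond i D hD x

/-- let `p` be strictly positive over variables partitioned into blocks
`C_1, …, C_m` with parent assignment `Pa(C_i) ⊆ C_1 ∪ … ∪ C_{i−1}` and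
`Pa(D) ⊆ Pa(C_i)` for `D ⊆ C_i`.  If `p(V) = Π_i p(C_i | Pa(C_i))` and
`p(D | Pa(C_i)) = p(D | Pa(D))` for every `D ⊆ C_i`, then for every `D ⊆ C_i`:
`D ⊥_p (C_1 ∪ … ∪ C_{i−1}) \ Pa(D) | Pa(D)`.
(Conditional distributions are expressed multiplicatively via marginals.) -/
theorem stmt8 {V : Type*} [Fintype V] [DecidableEq V] {X : V → Type*}
    [∀ v, Fintype (X v)] {m : ℕ}
    (p : (∀ v, X v) → ℝ) (hpos : ∀ x, 0 < p x) (hsum : ∑ x, p x = 1)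
    (Cb : Fin m → Finset V)
    (hcover : (Finset.univ : Finset (Fin m)).biUnion Cb = Finset.univ)
    (hdisj : ∀ i j : Fin m, i ≠ j → Disjoint (Cb i) (Cb j))
    (Pa : Finset V → Finset V)
    (hPaC : ∀ i : Fin m,
      Pa (Cb i) ⊆ (Finset.univ.filter (fun j => j < i)).biUnion Cb)
    (hPaD : ∀ i : Fin m, ∀ D ⊆ Cb i, Pa D ⊆ Pa (Cb i))
    -- (i)  p(V) = Π_i p(C_i | Pa(C_i))
    (hfac : ∀ x, p x * ∏ i : Fin m, marginal p (Pa (Cb i)) x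
        = ∏ i : Fin m, marginal p (Cb i ∪ Pa (Cb i)) x)
    -- (ii)  p(D | Pa(C_i)) = p(D | Pa(D)) for every D ⊆ C_i
    (hcond : ∀ i : Fin m, ∀ D ⊆ Cb i, ∀ x,
      marginal p (D ∪ Pa (Cb i)) x * marginal p (Pa D) x
        = marginal p (D ∪ Pa D) x * marginal p (Pa (Cb i)) x) :
    ∀ i : Fin m, ∀ D ⊆ Cb i,
      CondIndep p D
        (((Finset.univ.filter (fun j => j < i)).biUnion Cb) \ Pa D) (Pa D) :=
  stmt8_general p hpos Cb hcover hdisj Pa hPaC hPaD hfac hcond
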